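/- arXiv:1003.0915 — 7 statements merged into one kernel-verified Lean document; each statement's English description precedes it below -/
import Mathlib

section
/- In the pointwise model of a paraquaternionic CR-submanifold one has J_α(ν_α) = D^⊥ for each α = 1, 2, 3, and moreover J₁(ν₂) = ν₃, J₂(ν₃) = ν₁, and J₃(ν₁) = ν₂. -/
/-! Each identity pushes `D^⊥` through a product `J_α J_β`, which the paraquaternionic relations
identify with `±id` or `±J_γ`; negating a map does not change the image of a submodule. -/

/-- The `g`-orthogonal complement of `S` taken inside `W`:
`{w ∈ W | ∀ s ∈ S, g w s = 0}`. -/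
def orthIn {V : Type*} [AddCommGroup V] [Module ℝ V]
    (g : LinearMap.BilinForm ℝ V) (W S : Submodule ℝ V) : Submodule ℝ V where
  carrier := {w | w ∈ W ∧ ∀ s ∈ S, g w s = 0}
  add_mem' := fun {a b} ha hb => ⟨W.add_mem ha.1 hb.1, fun s hs => by
    simp [ha.2 s hs, hb.2 s hs]⟩
  zero_mem' := ⟨W.zero_mem, fun s _ => by simp⟩
  smul_mem' := fun c x hx => ⟨W.smul_mem c hx.1, fun s hs => by
    simp [hx.2 s hs]⟩

theorem Submodule.map_map_of_comp_eq_neg {R M : Type*} [Ring R] [AddCommGroup M] [Module R M]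
    {f g h : M →ₗ[R] M} (p : Submodule R M) (hfg : f ∘ₗ g = -h) :
    (p.map g).map f = p.map h := by
  rw [← Submodule.map_comp, hfg, Submodule.map_neg]

theorem paraquaternionic_CR_nu_images_general
    (V : Type*) [AddCommGroup V] [Module ℝ V]
    (g : LinearMap.BilinForm ℝ V)
    (J1 J2 J3 : V →ₗ[ℝ] V)
    (h11 : J1 ∘ₗ J1 = -LinearMap.id)
    (h22 : J2 ∘ₗ J2 = LinearMap.id)
    (h33 : J3 ∘ₗ J3 = LinearMap.id)
    (h12 : J1 ∘ₗ J2 = -J3)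
    (h23 : J2 ∘ₗ J3 = J1)
    (h31 : J3 ∘ₗ J1 = -J2)
    (W D : Submodule ℝ V) :
    ((orthIn g W D).map J1).map J1 = orthIn g W D ∧
    ((orthIn g W D).map J2).map J2 = orthIn g W D ∧
    ((orthIn g W D).map J3).map J3 = orthIn g W D ∧
    ((orthIn g W D).map J2).map J1 = (orthIn g W D).map J3 ∧
    ((orthIn g W D).map J3).map J2 = (orthIn g W D).map J1 ∧
    ((orthIn g W D).map J1).map J3 = (orthIn g W D).map J2 := by
  set Dperp := orthIn g W D
  refine ⟨?_, ?_, ?_, ?_, ?_, ?_⟩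
  · rw [Dperp.map_map_of_comp_eq_neg h11, Submodule.map_id]
  · rw [← Submodule.map_comp, h22, Submodule.map_id]
  · rw [← Submodule.map_comp, h33, Submodule.map_id]
  · exact Dperp.map_map_of_comp_eq_neg h12
  · rw [← Submodule.map_comp, h23]
  · exact Dperp.map_map_of_comp_eq_neg h31

/-- Pointwise model of a paraquaternionic CR-submanifold:
`J_α(ν_α) = D^⊥` for each `α`, and `J₁(ν₂) = ν₃`, `J₂(ν₃) = ν₁`, `J₃(ν₁) = ν₂`,
where `ν_α := J_α(D^⊥)`, `D^⊥` the `g`-orthogonal complement of `D` in `W` and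
`W^⊥` the `g`-orthogonal complement of `W` in `V`. -/
theorem paraquaternionic_CR_nu_images
    (V : Type*) [AddCommGroup V] [Module ℝ V] [FiniteDimensional ℝ V]
    (g : LinearMap.BilinForm ℝ V)
    (hsymm : ∀ x y : V, g x y = g y x)
    (hnd : g.Nondegenerate)
    (J1 J2 J3 : V →ₗ[ℝ] V)
    (h11 : J1 ∘ₗ J1 = -LinearMap.id)
    (h22 : J2 ∘ₗ J2 = LinearMap.id)
    (h33 : J3 ∘ₗ J3 = LinearMap.id)
    (h12 : J1 ∘ₗ J2 = -J3) (h21 : J2 ∘ₗ J1 = J3)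
    (h23 : J2 ∘ₗ J3 = J1) (h32 : J3 ∘ₗ J2 = -J1)
    (h31 : J3 ∘ₗ J1 = -J2) (h13 : J1 ∘ₗ J3 = J2)
    (hg1 : ∀ x y : V, g (J1 x) (J1 y) = g x y)
    (hg2 : ∀ x y : V, g (J2 x) (J2 y) = -g x y)
    (hg3 : ∀ x y : V, g (J3 x) (J3 y) = -g x y)
    (W D : Submodule ℝ V) (hDW : D ≤ W)
    (hWnd : ∀ w ∈ W, (∀ w' ∈ W, g w w' = 0) → w = 0)
    (hDnd : ∀ d ∈ D, (∀ d' ∈ D, g d d' = 0) → d = 0)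
    (hJ1D : D.map J1 = D) (hJ2D : D.map J2 = D) (hJ3D : D.map J3 = D)
    (hCR1 : (orthIn g W D).map J1 ≤ orthIn g ⊤ W)
    (hCR2 : (orthIn g W D).map J2 ≤ orthIn g ⊤ W)
    (hCR3 : (orthIn g W D).map J3 ≤ orthIn g ⊤ W) :
    ((orthIn g W D).map J1).map J1 = orthIn g W D ∧
    ((orthIn g W D).map J2).map J2 = orthIn g W D ∧
    ((orthIn g W D).map J3).map J3 = orthIn g W D ∧
    ((orthIn g W D).map J2).map J1 = (orthIn g W D).map J3 ∧
    ((orthIn g W D).map J3).map J2 = (orthIn g W D).map J1 ∧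
    ((orthIn g W D).map J1).map J3 = (orthIn g W D).map J2 :=
  paraquaternionic_CR_nu_images_general V g J1 J2 J3 h11 h22 h33 h12 h23 h31 W D
end

section
/- In the pointwise model of a paraquaternionic CR-submanifold, the subspaces ν₁, ν₂, ν₃ of W^⊥ are pairwise g-orthogonal, the restriction of g to each ν_α is nondegenerate, the sum ν^⊥ := ν₁ + ν₂ + ν₃ is a direct sum, and dim ν^⊥ = 3 · dim D^⊥. -/
/-!
Each `J_α` is `g`-conformal with `J_α² = ±1`, hence `g`-skew-adjoint, so
`g (J_α u) (J_β v) = -g u (J_α J_β v) = ±g u (J_γ v) = 0`, since `J_γ v ∈ W^⊥` and `u ∈ W`.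
Nondegeneracy of `g` on `D` splits `W = D ⊕ D^⊥`, so nondegeneracy on `W` passes to `D^⊥`
and, by conformality, to each `ν_α`. Nondegenerate pairwise orthogonal subspaces are
independent, and each `J_α` is injective, which gives the dimension count.
-/

namespace LinearMap.BilinForm

variable {V : Type*} [AddCommGroup V] [Module ℝ V] {g : LinearMap.BilinForm ℝ V}

theorem orthIn_eq_inf_orthogonal (hg : g.IsRefl) (W S : Submodule ℝ V) :
    orthIn g W S = W ⊓ g.orthogonal S := by
  ext x
  exact and_congr_right fun _ => forall₂_congr fun s _ => ⟨hg x s, hg s x⟩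

theorem orthIn_le (W S : Submodule ℝ V) : orthIn g W S ≤ W := fun _ hx => hx.1

theorem orthIn_top_eq_orthogonal (hg : g.IsRefl) (W : Submodule ℝ V) :
    orthIn g ⊤ W = g.orthogonal W := by
  rw [orthIn_eq_inf_orthogonal hg, top_inf_eq]

theorem disjoint_orthogonal_self_iff (hg : g.IsRefl) (S : Submodule ℝ V) :
    Disjoint S (g.orthogonal S) ↔ ∀ x ∈ S, (∀ y ∈ S, g x y = 0) → x = 0 := by
  rw [Submodule.disjoint_def]
  exact forall₂_congr fun x _ => imp_congr_left (forall₂_congr fun y _ => ⟨hg y x, hg x y⟩)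

theorem sup_orthIn_eq [FiniteDimensional ℝ V] (hg : g.IsRefl) {W D : Submodule ℝ V}
    (hDW : D ≤ W) (hD : Disjoint D (g.orthogonal D)) : D ⊔ orthIn g W D = W := by
  rw [orthIn_eq_inf_orthogonal hg, inf_comm, ← sup_inf_assoc_of_le _ hDW,
    ((isCompl_orthogonal_iff_disjoint hg).2 hD).sup_eq_top, top_inf_eq]

theorem disjoint_orthIn_orthogonal [FiniteDimensional ℝ V] (hg : g.IsRefl)
    {W D : Submodule ℝ V} (hDW : D ≤ W) (hW : Disjoint W (g.orthogonal W))
    (hD : Disjoint D (g.orthogonal D)) :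
    Disjoint (orthIn g W D) (g.orthogonal (orthIn g W D)) := by
  rw [Submodule.disjoint_def]
  rintro x ⟨hxW, hxD⟩ hx
  refine Submodule.disjoint_def.1 hW x hxW fun w hw => ?_
  rw [← sup_orthIn_eq hg hDW hD] at hw
  obtain ⟨d, hd, p, hp, rfl⟩ := Submodule.mem_sup.1 hw
  rw [map_add, LinearMap.add_apply, hg x d (hxD d hd), hx p hp, add_zero]

theorem isSkewAdjoint_of_comp_self_eq_smul {J : V →ₗ[ℝ] V} {c : ℝ} (hc : c ≠ 0)
    (hJJ : J ∘ₗ J = c • LinearMap.id) (hJ : ∀ x y, g (J x) (J y) = -c * g x y) :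
    LinearMap.IsSkewAdjoint g J := by
  intro x y
  have h := hJ x (J y)
  rw [← LinearMap.comp_apply J J, hJJ] at h
  simp only [LinearMap.smul_apply, LinearMap.id_apply, map_smul, smul_eq_mul] at h
  simp only [Pi.neg_apply, map_neg]
  apply mul_left_cancel₀ hc
  linarith

theorem map_le_orthogonal_map_of_isSkewAdjoint {J K : V →ₗ[ℝ] V}
    (hJ : LinearMap.IsSkewAdjoint g J) {S T W : Submodule ℝ V} (hSW : S ≤ W)
    (hT : (T.map K).map J ≤ g.orthogonal W) :
    T.map K ≤ g.orthogonal (S.map J) := by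
  rintro _ ⟨v, hv, rfl⟩ _ ⟨u, hu, rfl⟩
  rw [hJ u (K v), Pi.neg_apply, map_neg, hT ⟨K v, ⟨v, hv, rfl⟩, rfl⟩ u (hSW hu), neg_zero]

theorem disjoint_map_orthogonal_map_of_isSkewAdjoint {J : V →ₗ[ℝ] V} {c : ℝ} (hc : c ≠ 0)
    (hJJ : J ∘ₗ J = c • LinearMap.id) (hJ : LinearMap.IsSkewAdjoint g J) {S : Submodule ℝ V}
    (hS : Disjoint S (g.orthogonal S)) :
    Disjoint (S.map J) (g.orthogonal (S.map J)) := by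
  rw [Submodule.disjoint_def]
  rintro _ ⟨u, hu, rfl⟩ h
  have hu0 : u = 0 := Submodule.disjoint_def.1 hS u hu fun v hv => by
    have h' := h (J v) ⟨v, hv, rfl⟩
    rw [hJ v (J u), Pi.neg_apply, ← LinearMap.comp_apply J J, hJJ] at h'
    simpa [hc] using h'
  rw [hu0, map_zero]

theorem IsRefl.le_orthogonal_comm (hg : g.IsRefl) {S T : Submodule ℝ V} :
    S ≤ g.orthogonal T ↔ T ≤ g.orthogonal S :=
  ⟨fun h => (le_orthogonal_orthogonal hg).trans (orthogonal_le h),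
    fun h => (le_orthogonal_orthogonal hg).trans (orthogonal_le h)⟩

end LinearMap.BilinForm

namespace Submodule

variable {V : Type*} [AddCommGroup V] [Module ℝ V]

theorem eq_zero_of_add_add_eq_zero {A B C : Submodule ℝ V} (hAB : Disjoint A B)
    (hABC : Disjoint (A ⊔ B) C) {x y z : V} (hx : x ∈ A) (hy : y ∈ B) (hz : z ∈ C)
    (h : x + y + z = 0) : x = 0 ∧ y = 0 ∧ z = 0 := by
  obtain ⟨hxy, hz0⟩ := disjoint_iff_add_eq_zero.1 hABC (add_mem_sup hx hy) hz h
  exact ⟨(disjoint_iff_add_eq_zero.1 hAB hx hy hxy).1,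
    (disjoint_iff_add_eq_zero.1 hAB hx hy hxy).2, hz0⟩

theorem finrank_sup_of_disjoint [FiniteDimensional ℝ V] {A B : Submodule ℝ V}
    (h : Disjoint A B) : Module.finrank ℝ ↥(A ⊔ B) = Module.finrank ℝ A + Module.finrank ℝ B := by
  rw [← finrank_sup_add_finrank_inf_eq, h.eq_bot, finrank_bot, add_zero]

theorem finrank_map_of_comp_self_eq_smul {J : V →ₗ[ℝ] V} {c : ℝ} (hc : c ≠ 0)
    (hJJ : J ∘ₗ J = c • LinearMap.id) (S : Submodule ℝ V) :
    Module.finrank ℝ (S.map J) = Module.finrank ℝ S := by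
  have hinj : Function.Injective J := fun x y hxy => by
    have h := congrArg J hxy
    rw [← LinearMap.comp_apply J J, ← LinearMap.comp_apply J J, hJJ] at h
    simpa [hc] using h
  exact (equivMapOfInjective J hinj S).finrank_eq.symm

end Submodule

open LinearMap.BilinForm Submodule in
theorem paraquaternionic_CR_nu_decomposition_general
    (V : Type*) [AddCommGroup V] [Module ℝ V] [FiniteDimensional ℝ V]
    (g : LinearMap.BilinForm ℝ V)
    (hsymm : ∀ x y : V, g x y = g y x)
    (J1 J2 J3 : V →ₗ[ℝ] V)
    (h11 : J1 ∘ₗ J1 = -LinearMap.id)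
    (h22 : J2 ∘ₗ J2 = LinearMap.id)
    (h33 : J3 ∘ₗ J3 = LinearMap.id)
    (h12 : J1 ∘ₗ J2 = -J3)
    (h23 : J2 ∘ₗ J3 = J1)
    (h13 : J1 ∘ₗ J3 = J2)
    (hg1 : ∀ x y : V, g (J1 x) (J1 y) = g x y)
    (hg2 : ∀ x y : V, g (J2 x) (J2 y) = -g x y)
    (hg3 : ∀ x y : V, g (J3 x) (J3 y) = -g x y)
    (W D : Submodule ℝ V) (hDW : D ≤ W)
    (hWnd : ∀ w ∈ W, (∀ w' ∈ W, g w w' = 0) → w = 0)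
    (hDnd : ∀ d ∈ D, (∀ d' ∈ D, g d d' = 0) → d = 0)
    (hCR1 : (orthIn g W D).map J1 ≤ orthIn g ⊤ W)
    (hCR2 : (orthIn g W D).map J2 ≤ orthIn g ⊤ W)
    (hCR3 : (orthIn g W D).map J3 ≤ orthIn g ⊤ W) :
    (∀ x ∈ (orthIn g W D).map J1, ∀ y ∈ (orthIn g W D).map J2, g x y = 0) ∧
    (∀ x ∈ (orthIn g W D).map J1, ∀ y ∈ (orthIn g W D).map J3, g x y = 0) ∧
    (∀ x ∈ (orthIn g W D).map J2, ∀ y ∈ (orthIn g W D).map J3, g x y = 0) ∧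
    (∀ x ∈ (orthIn g W D).map J1,
      (∀ y ∈ (orthIn g W D).map J1, g x y = 0) → x = 0) ∧
    (∀ x ∈ (orthIn g W D).map J2,
      (∀ y ∈ (orthIn g W D).map J2, g x y = 0) → x = 0) ∧
    (∀ x ∈ (orthIn g W D).map J3,
      (∀ y ∈ (orthIn g W D).map J3, g x y = 0) → x = 0) ∧
    (∀ x1 ∈ (orthIn g W D).map J1, ∀ x2 ∈ (orthIn g W D).map J2,
      ∀ x3 ∈ (orthIn g W D).map J3,
        x1 + x2 + x3 = 0 → x1 = 0 ∧ x2 = 0 ∧ x3 = 0) ∧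
    Module.finrank ℝ
        ↥((orthIn g W D).map J1 ⊔ (orthIn g W D).map J2 ⊔ (orthIn g W D).map J3)
      = 3 * Module.finrank ℝ ↥(orthIn g W D) := by
  have hg : g.IsRefl := (isSymm_def.2 hsymm).isRefl
  set Dp := orthIn g W D
  rw [orthIn_top_eq_orthogonal hg] at hCR1 hCR2 hCR3
  have hJ1J1 : J1 ∘ₗ J1 = (-1 : ℝ) • LinearMap.id := by rw [h11, neg_one_smul]
  have hJ2J2 : J2 ∘ₗ J2 = (1 : ℝ) • LinearMap.id := by rw [h22, one_smul]
  have hJ3J3 : J3 ∘ₗ J3 = (1 : ℝ) • LinearMap.id := by rw [h33, one_smul]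
  have skew1 := isSkewAdjoint_of_comp_self_eq_smul (by norm_num) hJ1J1 (by simpa using hg1)
  have skew2 := isSkewAdjoint_of_comp_self_eq_smul one_ne_zero hJ2J2 (by simpa using hg2)
  have skew3 := isSkewAdjoint_of_comp_self_eq_smul one_ne_zero hJ3J3 (by simpa using hg3)
  have o12 : Dp.map J2 ≤ g.orthogonal (Dp.map J1) := map_le_orthogonal_map_of_isSkewAdjoint
    skew1 (orthIn_le W D) (by rwa [← map_comp, h12, Submodule.map_neg])
  have o13 : Dp.map J3 ≤ g.orthogonal (Dp.map J1) := map_le_orthogonal_map_of_isSkewAdjoint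
    skew1 (orthIn_le W D) (by rwa [← map_comp, h13])
  have o23 : Dp.map J3 ≤ g.orthogonal (Dp.map J2) := map_le_orthogonal_map_of_isSkewAdjoint
    skew2 (orthIn_le W D) (by rwa [← map_comp, h23])
  have hDp : Disjoint Dp (g.orthogonal Dp) := disjoint_orthIn_orthogonal hg hDW
    ((disjoint_orthogonal_self_iff hg W).2 hWnd) ((disjoint_orthogonal_self_iff hg D).2 hDnd)
  have n1 := disjoint_map_orthogonal_map_of_isSkewAdjoint (by norm_num) hJ1J1 skew1 hDp
  have n2 := disjoint_map_orthogonal_map_of_isSkewAdjoint one_ne_zero hJ2J2 skew2 hDp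
  have n3 := disjoint_map_orthogonal_map_of_isSkewAdjoint one_ne_zero hJ3J3 skew3 hDp
  have d12 : Disjoint (Dp.map J1) (Dp.map J2) := n1.mono_right o12
  have d123 : Disjoint (Dp.map J1 ⊔ Dp.map J2) (Dp.map J3) :=
    (n3.mono_right (sup_le (hg.le_orthogonal_comm.1 o13) (hg.le_orthogonal_comm.1 o23))).symm
  refine ⟨fun x hx y hy => o12 hy x hx, fun x hx y hy => o13 hy x hx,
    fun x hx y hy => o23 hy x hx, (disjoint_orthogonal_self_iff hg _).1 n1,
    (disjoint_orthogonal_self_iff hg _).1 n2, (disjoint_orthogonal_self_iff hg _).1 n3,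
    fun x1 h1 x2 h2 x3 h3 => eq_zero_of_add_add_eq_zero d12 d123 h1 h2 h3, ?_⟩
  rw [finrank_sup_of_disjoint d123, finrank_sup_of_disjoint d12,
    finrank_map_of_comp_self_eq_smul (by norm_num) hJ1J1,
    finrank_map_of_comp_self_eq_smul one_ne_zero hJ2J2,
    finrank_map_of_comp_self_eq_smul one_ne_zero hJ3J3]
  ring

/-- Pointwise model of a paraquaternionic CR-submanifold: the subspaces
`ν_α := J_α(D^⊥)` of `W^⊥` are pairwise `g`-orthogonal, `g` restricted to each `ν_α`
is nondegenerate, the sum `ν^⊥ := ν₁ + ν₂ + ν₃` is direct, and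
`dim ν^⊥ = 3 · dim D^⊥`. -/
theorem paraquaternionic_CR_nu_decomposition
    (V : Type*) [AddCommGroup V] [Module ℝ V] [FiniteDimensional ℝ V]
    (g : LinearMap.BilinForm ℝ V)
    (hsymm : ∀ x y : V, g x y = g y x)
    (hnd : g.Nondegenerate)
    (J1 J2 J3 : V →ₗ[ℝ] V)
    (h11 : J1 ∘ₗ J1 = -LinearMap.id)
    (h22 : J2 ∘ₗ J2 = LinearMap.id)
    (h33 : J3 ∘ₗ J3 = LinearMap.id)
    (h12 : J1 ∘ₗ J2 = -J3) (h21 : J2 ∘ₗ J1 = J3)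
    (h23 : J2 ∘ₗ J3 = J1) (h32 : J3 ∘ₗ J2 = -J1)
    (h31 : J3 ∘ₗ J1 = -J2) (h13 : J1 ∘ₗ J3 = J2)
    (hg1 : ∀ x y : V, g (J1 x) (J1 y) = g x y)
    (hg2 : ∀ x y : V, g (J2 x) (J2 y) = -g x y)
    (hg3 : ∀ x y : V, g (J3 x) (J3 y) = -g x y)
    (W D : Submodule ℝ V) (hDW : D ≤ W)
    (hWnd : ∀ w ∈ W, (∀ w' ∈ W, g w w' = 0) → w = 0)
    (hDnd : ∀ d ∈ D, (∀ d' ∈ D, g d d' = 0) → d = 0)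
    (hJ1D : D.map J1 = D) (hJ2D : D.map J2 = D) (hJ3D : D.map J3 = D)
    (hCR1 : (orthIn g W D).map J1 ≤ orthIn g ⊤ W)
    (hCR2 : (orthIn g W D).map J2 ≤ orthIn g ⊤ W)
    (hCR3 : (orthIn g W D).map J3 ≤ orthIn g ⊤ W) :
    (∀ x ∈ (orthIn g W D).map J1, ∀ y ∈ (orthIn g W D).map J2, g x y = 0) ∧
    (∀ x ∈ (orthIn g W D).map J1, ∀ y ∈ (orthIn g W D).map J3, g x y = 0) ∧
    (∀ x ∈ (orthIn g W D).map J2, ∀ y ∈ (orthIn g W D).map J3, g x y = 0) ∧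
    (∀ x ∈ (orthIn g W D).map J1,
      (∀ y ∈ (orthIn g W D).map J1, g x y = 0) → x = 0) ∧
    (∀ x ∈ (orthIn g W D).map J2,
      (∀ y ∈ (orthIn g W D).map J2, g x y = 0) → x = 0) ∧
    (∀ x ∈ (orthIn g W D).map J3,
      (∀ y ∈ (orthIn g W D).map J3, g x y = 0) → x = 0) ∧
    (∀ x1 ∈ (orthIn g W D).map J1, ∀ x2 ∈ (orthIn g W D).map J2,
      ∀ x3 ∈ (orthIn g W D).map J3,
        x1 + x2 + x3 = 0 → x1 = 0 ∧ x2 = 0 ∧ x3 = 0) ∧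
    Module.finrank ℝ
        ↥((orthIn g W D).map J1 ⊔ (orthIn g W D).map J2 ⊔ (orthIn g W D).map J3)
      = 3 * Module.finrank ℝ ↥(orthIn g W D) :=
  paraquaternionic_CR_nu_decomposition_general V g hsymm J1 J2 J3 h11 h22 h33 h12 h23 h13 hg1 hg2
    hg3 W D hDW hWnd hDnd hCR1 hCR2 hCR3
end

section
/- In the pointwise model of a paraquaternionic CR-submanifold, let ν^⊥ := ν₁ + ν₂ + ν₃ and let ν := {u ∈ W^⊥ : g(u, n) = 0 for all n ∈ ν^⊥} be the g-orthogonal complement of ν^⊥ in W^⊥. Then J_α(ν) = ν for α = 1, 2, 3. -/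
/-!
Since `ν ⊆ W^⊥` and `ν ⊥ ν^⊥`, `ν` is the `g`-orthogonal complement in `V` of `K := W + ν^⊥`.
Nondegeneracy of `g` on `D` splits `W = D ⊕ D^⊥`, so `K = D + D^⊥ + J₁D^⊥ + J₂D^⊥ + J₃D^⊥`.
Each `J_α` preserves `D`, and `J_α J_β ∈ {±id, ±J_γ}`, so `J_α` permutes these summands and
`J_α K ⊆ K`. Each `J_α` is skew-adjoint for `g`, hence preserves the orthogonal complement of
`K`; as `J_α² = ±id`, the inclusion `J_α ν ⊆ ν` is an equality.
-/

open LinearMap (BilinForm IsSkewAdjoint)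

theorem Submodule.map_eq_of_map_le_of_map_comp_self {R M : Type*} [Semiring R]
    [AddCommMonoid M] [Module R M] {p : Submodule R M} {f : M →ₗ[R] M} (h : p.map f ≤ p)
    (hff : p.map (f ∘ₗ f) = p) : p.map f = p :=
  le_antisymm h <| calc
    p = (p.map f).map f := by rw [← Submodule.map_comp, hff]
    _ ≤ p.map f := Submodule.map_mono h

section OrthIn

variable {V : Type*} [AddCommGroup V] [Module ℝ V] (g : BilinForm ℝ V)

theorem mem_orthIn {W S : Submodule ℝ V} {x : V} :
    x ∈ orthIn g W S ↔ x ∈ W ∧ ∀ s ∈ S, g x s = 0 :=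
  Iff.rfl

theorem orthIn_orthIn_top (W N : Submodule ℝ V) :
    orthIn g (orthIn g ⊤ W) N = orthIn g ⊤ (W ⊔ N) := by
  ext x
  simp only [mem_orthIn, Submodule.mem_top, true_and]
  constructor
  · rintro ⟨hW, hN⟩ _ hs
    obtain ⟨w, hw, n, hn, rfl⟩ := Submodule.mem_sup.mp hs
    rw [map_add, hW w hw, hN n hn, add_zero]
  · intro h
    exact ⟨fun w hw => h w (Submodule.mem_sup_left hw),
      fun n hn => h n (Submodule.mem_sup_right hn)⟩

theorem orthIn_eq_orthogonal_inf (hsymm : ∀ x y, g x y = g y x) (W S : Submodule ℝ V) :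
    orthIn g W S = g.orthogonal S ⊓ W := by
  ext x
  simp only [mem_orthIn, Submodule.mem_inf, LinearMap.BilinForm.mem_orthogonal_iff, hsymm _ x]
  exact and_comm

theorem sup_orthIn_eq [FiniteDimensional ℝ V] (hsymm : ∀ x y, g x y = g y x)
    {W D : Submodule ℝ V} (hDW : D ≤ W) (hDnd : ∀ d ∈ D, (∀ d' ∈ D, g d d' = 0) → d = 0) :
    D ⊔ orthIn g W D = W := by
  have hD : IsCompl D (g.orthogonal D) := by
    refine (LinearMap.BilinForm.isCompl_orthogonal_iff_disjoint fun x y h => ?_).mpr ?_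
    · rwa [hsymm]
    refine Submodule.disjoint_def.mpr fun d hd hd' => hDnd d hd fun d' hd'' => ?_
    rw [hsymm]
    exact hd' d' hd''
  rw [orthIn_eq_orthogonal_inf g hsymm, ← sup_inf_assoc_of_le _ hDW, hD.sup_eq_top, top_inf_eq]

theorem map_orthIn_top_le {J : V →ₗ[ℝ] V} (hJ : IsSkewAdjoint g J) {K : Submodule ℝ V}
    (hK : K.map J ≤ K) : (orthIn g ⊤ K).map J ≤ orthIn g ⊤ K := by
  rintro _ ⟨x, ⟨-, hx⟩, rfl⟩
  refine ⟨trivial, fun k hk => ?_⟩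
  rw [hJ x k, Pi.neg_apply, map_neg, hx _ (hK ⟨k, hk, rfl⟩), neg_zero]

theorem isSkewAdjoint_of_comp_self_eq_neg_id {J : V →ₗ[ℝ] V} (hJJ : J ∘ₗ J = -LinearMap.id)
    (hg : ∀ x y, g (J x) (J y) = g x y) : IsSkewAdjoint g J := fun x y => by
  have hy : J (J y) = -y := LinearMap.congr_fun hJJ y
  calc g (J x) y = -g (J x) (J (J y)) := by rw [hy, map_neg, neg_neg]
    _ = g x ((-J) y) := by rw [hg, LinearMap.neg_apply, map_neg]

theorem isSkewAdjoint_of_comp_self_eq_id {J : V →ₗ[ℝ] V} (hJJ : J ∘ₗ J = LinearMap.id)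
    (hg : ∀ x y, g (J x) (J y) = -g x y) : IsSkewAdjoint g J := fun x y => by
  have hy : J (J y) = y := LinearMap.congr_fun hJJ y
  calc g (J x) y = g (J x) (J (J y)) := by rw [hy]
    _ = g x ((-J) y) := by rw [hg, LinearMap.neg_apply, map_neg]

end OrthIn

theorem paraquaternionic_CR_nu_invariant_general
    (V : Type*) [AddCommGroup V] [Module ℝ V] [FiniteDimensional ℝ V]
    (g : LinearMap.BilinForm ℝ V)
    (hsymm : ∀ x y : V, g x y = g y x)
    (J1 J2 J3 : V →ₗ[ℝ] V)
    (h11 : J1 ∘ₗ J1 = -LinearMap.id)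
    (h22 : J2 ∘ₗ J2 = LinearMap.id)
    (h33 : J3 ∘ₗ J3 = LinearMap.id)
    (h12 : J1 ∘ₗ J2 = -J3) (h21 : J2 ∘ₗ J1 = J3)
    (h23 : J2 ∘ₗ J3 = J1) (h32 : J3 ∘ₗ J2 = -J1)
    (h31 : J3 ∘ₗ J1 = -J2) (h13 : J1 ∘ₗ J3 = J2)
    (hg1 : ∀ x y : V, g (J1 x) (J1 y) = g x y)
    (hg2 : ∀ x y : V, g (J2 x) (J2 y) = -g x y)
    (hg3 : ∀ x y : V, g (J3 x) (J3 y) = -g x y)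
    (W D : Submodule ℝ V) (hDW : D ≤ W)
    (hDnd : ∀ d ∈ D, (∀ d' ∈ D, g d d' = 0) → d = 0)
    (hJ1D : D.map J1 = D) (hJ2D : D.map J2 = D) (hJ3D : D.map J3 = D)
    (nuperp : Submodule ℝ V)
    (hnuperp : nuperp =
      (orthIn g W D).map J1 ⊔ (orthIn g W D).map J2 ⊔ (orthIn g W D).map J3)
    (nu : Submodule ℝ V)
    (hnu : nu = orthIn g (orthIn g ⊤ W) nuperp) :
    nu.map J1 = nu ∧ nu.map J2 = nu ∧ nu.map J3 = nu := by
  subst hnuperp hnu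
  set Dp := orthIn g W D
  have hW : D ⊔ Dp = W := sup_orthIn_eq g hsymm hDW hDnd
  rw [orthIn_orthIn_top, ← hW]
  refine ⟨?_, ?_, ?_⟩ <;>
    refine Submodule.map_eq_of_map_le_of_map_comp_self (map_orthIn_top_le g ?_ ?_) ?_
  · exact isSkewAdjoint_of_comp_self_eq_neg_id g h11 hg1
  · simp only [Submodule.map_sup, ← Submodule.map_comp, h11, h12, h13, Submodule.map_neg,
      Submodule.map_id, hJ1D]
    order
  · rw [h11, Submodule.map_neg, Submodule.map_id]
  · exact isSkewAdjoint_of_comp_self_eq_id g h22 hg2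
  · simp only [Submodule.map_sup, ← Submodule.map_comp, h21, h22, h23, Submodule.map_id, hJ2D]
    order
  · rw [h22, Submodule.map_id]
  · exact isSkewAdjoint_of_comp_self_eq_id g h33 hg3
  · simp only [Submodule.map_sup, ← Submodule.map_comp, h31, h32, h33, Submodule.map_neg,
      Submodule.map_id, hJ3D]
    order
  · rw [h33, Submodule.map_id]

/-- Pointwise model of a paraquaternionic CR-submanifold: with
`ν^⊥ := ν₁ + ν₂ + ν₃` (where `ν_α := J_α(D^⊥)`) and `ν` the `g`-orthogonal
complement of `ν^⊥` in `W^⊥`, one has `J_α(ν) = ν` for `α = 1, 2, 3`. -/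
theorem paraquaternionic_CR_nu_invariant
    (V : Type*) [AddCommGroup V] [Module ℝ V] [FiniteDimensional ℝ V]
    (g : LinearMap.BilinForm ℝ V)
    (hsymm : ∀ x y : V, g x y = g y x)
    (hnd : g.Nondegenerate)
    (J1 J2 J3 : V →ₗ[ℝ] V)
    (h11 : J1 ∘ₗ J1 = -LinearMap.id)
    (h22 : J2 ∘ₗ J2 = LinearMap.id)
    (h33 : J3 ∘ₗ J3 = LinearMap.id)
    (h12 : J1 ∘ₗ J2 = -J3) (h21 : J2 ∘ₗ J1 = J3)
    (h23 : J2 ∘ₗ J3 = J1) (h32 : J3 ∘ₗ J2 = -J1)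
    (h31 : J3 ∘ₗ J1 = -J2) (h13 : J1 ∘ₗ J3 = J2)
    (hg1 : ∀ x y : V, g (J1 x) (J1 y) = g x y)
    (hg2 : ∀ x y : V, g (J2 x) (J2 y) = -g x y)
    (hg3 : ∀ x y : V, g (J3 x) (J3 y) = -g x y)
    (W D : Submodule ℝ V) (hDW : D ≤ W)
    (hWnd : ∀ w ∈ W, (∀ w' ∈ W, g w w' = 0) → w = 0)
    (hDnd : ∀ d ∈ D, (∀ d' ∈ D, g d d' = 0) → d = 0)
    (hJ1D : D.map J1 = D) (hJ2D : D.map J2 = D) (hJ3D : D.map J3 = D)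
    (hCR1 : (orthIn g W D).map J1 ≤ orthIn g ⊤ W)
    (hCR2 : (orthIn g W D).map J2 ≤ orthIn g ⊤ W)
    (hCR3 : (orthIn g W D).map J3 ≤ orthIn g ⊤ W)
    (nuperp : Submodule ℝ V)
    (hnuperp : nuperp =
      (orthIn g W D).map J1 ⊔ (orthIn g W D).map J2 ⊔ (orthIn g W D).map J3)
    (nu : Submodule ℝ V)
    (hnu : nu = orthIn g (orthIn g ⊤ W) nuperp) :
    nu.map J1 = nu ∧ nu.map J2 = nu ∧ nu.map J3 = nu :=
  paraquaternionic_CR_nu_invariant_general V g hsymm J1 J2 J3 h11 h22 h33 h12 h21 h23 h32 h31 h13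
    hg1 hg2 hg3 W D hDW hDnd hJ1D hJ2D hJ3D nuperp hnuperp nu hnu
end

section
/- Let E be a real vector space and h : V × V → E an ℝ-bilinear map such that h(X, X) + ε_α h(J_α X, J_α X) = 0 for all X ∈ V and each α = 1, 2, 3. Then h(X, X) = 0 for all X ∈ V. (This is the key algebraic step in the proof that the paraquaternionic distribution of a paraquaternionic CR-submanifold of a paraquaternionic Kähler manifold is minimal, applied to the second fundamental form h of the distribution.) -/
theorem bilinear_diag_vanishes_of_paraquaternionic_general
    (V E : Type*) [AddCommGroup V] [Module ℝ V] [AddCommGroup E] [Module ℝ E]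
    (J1 J2 J3 : V →ₗ[ℝ] V)
    (h21 : J2 ∘ₗ J1 = J3)
    (h : V →ₗ[ℝ] V →ₗ[ℝ] E)
    (hh1 : ∀ x : V, h x x + h (J1 x) (J1 x) = 0)
    (hh2 : ∀ x : V, h x x - h (J2 x) (J2 x) = 0)
    (hh3 : ∀ x : V, h x x - h (J3 x) (J3 x) = 0) :
    ∀ x : V, h x x = 0 := by
  intro x
  have hJ1 : h (J1 x) (J1 x) = h x x :=
    calc h (J1 x) (J1 x) = h (J2 (J1 x)) (J2 (J1 x)) := sub_eq_zero.mp (hh2 (J1 x))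
      _ = h (J3 x) (J3 x) := by rw [← LinearMap.comp_apply J2 J1, h21]
      _ = h x x := (sub_eq_zero.mp (hh3 x)).symm
  have htwice : (2 : ℝ) • h x x = 0 := by rw [two_smul]; simpa only [hJ1] using hh1 x
  exact (smul_eq_zero.mp htwice).resolve_left two_ne_zero

/-- Key algebraic step in the proof that the paraquaternionic distribution of a
paraquaternionic CR-submanifold is minimal: if `h` is an `ℝ`-bilinear map with
`h(X, X) + ε_α h(J_α X, J_α X) = 0` for all `X` and each `α` (with
`ε₁ = 1, ε₂ = ε₃ = −1`), then `h(X, X) = 0` for all `X`. -/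
theorem bilinear_diag_vanishes_of_paraquaternionic
    (V E : Type*) [AddCommGroup V] [Module ℝ V] [AddCommGroup E] [Module ℝ E]
    (J1 J2 J3 : V →ₗ[ℝ] V)
    (h11 : J1 ∘ₗ J1 = -LinearMap.id)
    (h22 : J2 ∘ₗ J2 = LinearMap.id)
    (h33 : J3 ∘ₗ J3 = LinearMap.id)
    (h12 : J1 ∘ₗ J2 = -J3) (h21 : J2 ∘ₗ J1 = J3)
    (h23 : J2 ∘ₗ J3 = J1) (h32 : J3 ∘ₗ J2 = -J1)
    (h31 : J3 ∘ₗ J1 = -J2) (h13 : J1 ∘ₗ J3 = J2)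
    (h : V →ₗ[ℝ] V →ₗ[ℝ] E)
    (hh1 : ∀ x : V, h x x + h (J1 x) (J1 x) = 0)
    (hh2 : ∀ x : V, h x x - h (J2 x) (J2 x) = 0)
    (hh3 : ∀ x : V, h x x - h (J3 x) (J3 x) = 0) :
    ∀ x : V, h x x = 0 :=
  bilinear_diag_vanishes_of_paraquaternionic_general V E J1 J2 J3 h21 h hh1 hh2 hh3
end

section
/- Let B : V × V → V be a symmetric ℝ-bilinear map such that B(X, J_α Y) = J_α(B(X, Y)) for all X, Y ∈ V and each α = 1, 2, 3. Then B = 0. (This is the algebraic core of the proof that for a generic paraquaternionic CR-submanifold of a paraquaternionic Kähler manifold the paraquaternionic distribution is geodesic, applied to the second fundamental form B.) -/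
/-!
A symmetric `B` commuting with `J` in its second argument commutes with `J` in both, so
`B (J x) (J y) = J² (B x y)`. Apply this to `J₃ = J₂ J₁`: taking `J₃` at once gives
`J₃² = id`, while peeling off `J₂` and then `J₁` gives `J₂² J₁² = -id`. Hence `B = -B`.
-/

namespace LinearMap

variable {R M : Type*} [CommSemiring R] [AddCommMonoid M] [Module R M]
  {B : M →ₗ[R] M →ₗ[R] M}

theorem apply_comp_eq_comp_apply {J K : M →ₗ[R] M}
    (hJ : ∀ x y, B x (J y) = J (B x y)) (hK : ∀ x y, B x (K y) = K (B x y)) (x y : M) :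
    B x ((J ∘ₗ K) y) = (J ∘ₗ K) (B x y) := by
  simp only [comp_apply, hJ, hK]

theorem apply_map_map_of_symm {J : M →ₗ[R] M} (hB : ∀ x y, B x y = B y x)
    (hJ : ∀ x y, B x (J y) = J (B x y)) (x y : M) :
    B (J x) (J y) = (J ∘ₗ J) (B x y) := by
  rw [hJ, hB, hJ, hB, comp_apply]

end LinearMap

theorem symm_bilinear_commuting_with_paraquaternionic_vanishes_general
    (V : Type*) [AddCommGroup V] [Module ℝ V]
    (J1 J2 J3 : V →ₗ[ℝ] V)
    (h11 : J1 ∘ₗ J1 = -LinearMap.id)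
    (h22 : J2 ∘ₗ J2 = LinearMap.id)
    (h33 : J3 ∘ₗ J3 = LinearMap.id)
    (h21 : J2 ∘ₗ J1 = J3)
    (B : V →ₗ[ℝ] V →ₗ[ℝ] V)
    (hBsymm : ∀ x y : V, B x y = B y x)
    (hB1 : ∀ x y : V, B x (J1 y) = J1 (B x y))
    (hB2 : ∀ x y : V, B x (J2 y) = J2 (B x y)) :
    ∀ x y : V, B x y = 0 := by
  intro x y
  have hB3 : ∀ x y, B x (J3 y) = J3 (B x y) := h21 ▸ LinearMap.apply_comp_eq_comp_apply hB2 hB1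
  have h_pos : B (J3 x) (J3 y) = B x y := by
    rw [LinearMap.apply_map_map_of_symm hBsymm hB3, h33, LinearMap.id_apply]
  have h_neg : B (J3 x) (J3 y) = -B x y := by
    rw [← h21, LinearMap.comp_apply, LinearMap.comp_apply,
      LinearMap.apply_map_map_of_symm hBsymm hB2, h22, LinearMap.id_apply,
      LinearMap.apply_map_map_of_symm hBsymm hB1, h11, LinearMap.neg_apply, LinearMap.id_apply]
  have := IsAddTorsionFree.of_isTorsionFree ℝ V
  exact self_eq_neg.mp (h_pos.symm.trans h_neg)

/-- Algebraic core of the proof that for a generic paraquaternionic CR-submanifold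
the paraquaternionic distribution is geodesic: a symmetric `ℝ`-bilinear map
`B : V × V → V` satisfying `B(X, J_α Y) = J_α(B(X, Y))` for each `α` vanishes. -/
theorem symm_bilinear_commuting_with_paraquaternionic_vanishes
    (V : Type*) [AddCommGroup V] [Module ℝ V]
    (J1 J2 J3 : V →ₗ[ℝ] V)
    (h11 : J1 ∘ₗ J1 = -LinearMap.id)
    (h22 : J2 ∘ₗ J2 = LinearMap.id)
    (h33 : J3 ∘ₗ J3 = LinearMap.id)
    (h12 : J1 ∘ₗ J2 = -J3) (h21 : J2 ∘ₗ J1 = J3)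
    (h23 : J2 ∘ₗ J3 = J1) (h32 : J3 ∘ₗ J2 = -J1)
    (h31 : J3 ∘ₗ J1 = -J2) (h13 : J1 ∘ₗ J3 = J2)
    (B : V →ₗ[ℝ] V →ₗ[ℝ] V)
    (hBsymm : ∀ x y : V, B x y = B y x)
    (hB1 : ∀ x y : V, B x (J1 y) = J1 (B x y))
    (hB2 : ∀ x y : V, B x (J2 y) = J2 (B x y))
    (hB3 : ∀ x y : V, B x (J3 y) = J3 (B x y)) :
    ∀ x y : V, B x y = 0 :=
  symm_bilinear_commuting_with_paraquaternionic_vanishes_general V J1 J2 J3 h11 h22 h33 h21 B hBsymm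
    hB1 hB2
end

section
/- Let V be a finite-dimensional real vector space with a nondegenerate symmetric bilinear form g, and let J : V → V be a linear map with J² = −id and g(J X, J Y) = g(X, Y) for all X, Y ∈ V. Then there exists a g-orthogonal direct sum decomposition V = P ⊕ Q with g positive definite on P and g negative definite on Q such that dim P and dim Q are both even. (Supporting lemma: the compatible complex structure J₁ of an adapted metric forces both parts of the signature to be even, so that an almost paraquaternionic hermitian manifold has dimension 4m.) -/
/-!
Take a maximal `J`-invariant subspace `P` on which `g` is positive definite. Being definite, `P`
is a nondegenerate subspace, so `V = P ⊕ P^⊥`, and `P^⊥` is `J`-invariant because `J` is a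
`g`-isometry. If `g` were not negative definite on `P^⊥`, nondegeneracy would produce a vector
`q ∈ P^⊥` with `g q q > 0`; since `g(q, Jq) = 0` and `g(Jq, Jq) = g(q, q)`, the plane
`span {q, Jq}` is `J`-invariant and positive definite, contradicting the maximality of `P`.
Finally, any space carrying `J` with `J² = -1` is even-dimensional, as `det J ^ 2 = (-1) ^ dim`.
-/

open Module

theorem even_finrank_of_comp_self_eq_neg_id {W : Type*} [AddCommGroup W] [Module ℝ W]
    [FiniteDimensional ℝ W] (J : W →ₗ[ℝ] W) (hJ : J ∘ₗ J = -LinearMap.id) :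
    Even (finrank ℝ W) := by
  have hdet : LinearMap.det J * LinearMap.det J = (-1) ^ finrank ℝ W := by
    rw [← LinearMap.det_comp, hJ, ← neg_one_smul ℝ LinearMap.id, LinearMap.det_smul,
      LinearMap.det_id, mul_one]
  by_contra hodd
  rw [Nat.not_even_iff_odd] at hodd
  rw [hodd.neg_one_pow] at hdet
  nlinarith [mul_self_nonneg (LinearMap.det J)]

theorem even_finrank_of_invariant {V : Type*} [AddCommGroup V] [Module ℝ V]
    [FiniteDimensional ℝ V] {J : V →ₗ[ℝ] V} (hJ : J ∘ₗ J = -LinearMap.id)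
    {P : Submodule ℝ V} (hP : ∀ x ∈ P, J x ∈ P) : Even (finrank ℝ P) :=
  even_finrank_of_comp_self_eq_neg_id (J.restrict hP) <| by
    ext ⟨x, hx⟩
    simpa using LinearMap.congr_fun hJ x

namespace LinearMap.BilinForm

variable {V : Type*} [AddCommGroup V] [Module ℝ V]

def PosDefOn (g : LinearMap.BilinForm ℝ V) (P : Submodule ℝ V) : Prop :=
  ∀ p ∈ P, p ≠ 0 → 0 < g p p

variable {g : LinearMap.BilinForm ℝ V} {P W : Submodule ℝ V}

theorem posDefOn_bot : g.PosDefOn ⊥ := fun _ hp hp0 => absurd ((Submodule.mem_bot ℝ).mp hp) hp0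

theorem PosDefOn.nonneg (hP : g.PosDefOn P) {p : V} (hp : p ∈ P) : 0 ≤ g p p := by
  rcases eq_or_ne p 0 with rfl | hp0
  · simp
  · exact (hP p hp hp0).le

theorem PosDefOn.disjoint_orthogonal (hP : g.PosDefOn P) : Disjoint P (g.orthogonal P) := by
  rw [Submodule.disjoint_def]
  intro p hp hpo
  by_contra hp0
  exact (hP p hp hp0).ne' (hpo p hp)

theorem PosDefOn.sup (hg : g.IsSymm) (hP : g.PosDefOn P) (hW : g.PosDefOn W)
    (hPW : W ≤ g.orthogonal P) : g.PosDefOn (P ⊔ W) := by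
  intro v hv hv0
  obtain ⟨p, hp, w, hw, rfl⟩ := Submodule.mem_sup.mp hv
  have hpw : g p w = 0 := hPW hw p hp
  have hexpand : g (p + w) (p + w) = g p p + g w w := by
    simp only [map_add, LinearMap.add_apply, hpw, hg.eq w p]
    ring
  rw [hexpand]
  rcases eq_or_ne p 0 with rfl | hp0
  · simpa using hW w hw (by simpa using hv0)
  · exact add_pos_of_pos_of_nonneg (hP p hp hp0) (hW.nonneg hw)

theorem exists_smul_add_self_pos (hg : g.IsSymm) {q v : V} (hq : g q q = 0) (hqv : g q v ≠ 0) :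
    ∃ s : ℝ, 0 < g (s • q + v) (s • q + v) := by
  refine ⟨(1 - g v v) / (2 * g q v), ?_⟩
  have hexpand : ∀ s : ℝ, g (s • q + v) (s • q + v) = 2 * s * g q v + g v v := by
    intro s
    simp only [map_add, map_smul, LinearMap.add_apply, LinearMap.smul_apply, smul_eq_mul, hq,
      hg.eq v q]
    ring
  rw [hexpand]
  field_simp
  norm_num

theorem exists_mem_orthogonal_pos (hg : g.IsSymm) (hnd : g.Nondegenerate)
    (hP : IsCompl P (g.orthogonal P)) {q : V} (hq : q ∈ g.orthogonal P) (hq0 : q ≠ 0)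
    (hqq : 0 ≤ g q q) : ∃ q' ∈ g.orthogonal P, 0 < g q' q' := by
  rcases hqq.lt_or_eq with hpos | hzero
  · exact ⟨q, hq, hpos⟩
  obtain ⟨v, hv⟩ : ∃ v, g q v ≠ 0 := by
    by_contra! h
    exact hq0 (hnd.1 q h)
  obtain ⟨p, hp, u, hu, rfl⟩ := Submodule.mem_sup.mp (hP.sup_eq_top ▸ Submodule.mem_top : v ∈ _)
  have hqu : g q u ≠ 0 := by
    simpa [← hg.eq p q, hq p hp] using hv
  obtain ⟨s, hs⟩ := exists_smul_add_self_pos hg hzero.symm hqu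
  exact ⟨s • q + u, Submodule.add_mem _ (Submodule.smul_mem _ s hq) hu, hs⟩

section ComplexStructure

variable {J : V →ₗ[ℝ] V}

theorem apply_map_self_eq_zero (hg : g.IsSymm) (hJ : ∀ v, J (J v) = -v)
    (hgJ : ∀ x y, g (J x) (J y) = g x y) (q : V) : g q (J q) = 0 := by
  have h := hgJ q (J q)
  rw [hJ, map_neg, hg.eq (J q) q] at h
  linarith

theorem map_mem_orthogonal (hJ : ∀ v, J (J v) = -v) (hgJ : ∀ x y, g (J x) (J y) = g x y)
    (hP : ∀ x ∈ P, J x ∈ P) : ∀ x ∈ g.orthogonal P, J x ∈ g.orthogonal P := by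
  intro x hx p hp
  rw [← hgJ, hJ, map_neg, hx (J p) (hP p hp), neg_zero]

theorem map_mem_span_pair (hJ : ∀ v, J (J v) = -v) (q : V) :
    ∀ x ∈ Submodule.span ℝ {q, J q}, J x ∈ Submodule.span ℝ {q, J q} := by
  intro x hx
  refine (Submodule.map_span_le J _ _).mpr ?_ (Submodule.mem_map_of_mem hx)
  rintro v (rfl | rfl)
  · exact Submodule.subset_span (by simp)
  · rw [hJ]
    exact Submodule.neg_mem _ (Submodule.subset_span (by simp))

theorem posDefOn_span_pair (hg : g.IsSymm) (hJ : ∀ v, J (J v) = -v)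
    (hgJ : ∀ x y, g (J x) (J y) = g x y) {q : V} (hq : 0 < g q q) :
    g.PosDefOn (Submodule.span ℝ {q, J q}) := by
  intro w hw hw0
  obtain ⟨a, b, rfl⟩ := Submodule.mem_span_pair.mp hw
  have hqJq := apply_map_self_eq_zero hg hJ hgJ q
  have hexpand : g (a • q + b • J q) (a • q + b • J q) = (a ^ 2 + b ^ 2) * g q q := by
    simp only [map_add, map_smul, LinearMap.add_apply, LinearMap.smul_apply, smul_eq_mul,
      hqJq, hg.eq (J q) q, hgJ]
    ring
  have hab : a ≠ 0 ∨ b ≠ 0 := by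
    by_contra! h
    simp [h.1, h.2] at hw0
  rw [hexpand]
  have hsq : 0 < a ^ 2 + b ^ 2 := by
    rcases hab with h | h <;> positivity
  positivity

theorem exists_invariant_posDefOn_negDefOn_orthogonal [FiniteDimensional ℝ V] (hg : g.IsSymm)
    (hnd : g.Nondegenerate) (hJ : ∀ v, J (J v) = -v) (hgJ : ∀ x y, g (J x) (J y) = g x y) :
    ∃ P : Submodule ℝ V, (∀ x ∈ P, J x ∈ P) ∧ g.PosDefOn P ∧ IsCompl P (g.orthogonal P) ∧
      (-g).PosDefOn (g.orthogonal P) := by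
  obtain ⟨P, ⟨hPJ, hPpos⟩, hPmax⟩ :=
    set_has_maximal_iff_noetherian.mpr inferInstance
      {P : Submodule ℝ V | (∀ x ∈ P, J x ∈ P) ∧ g.PosDefOn P} ⟨⊥, by simp, posDefOn_bot⟩
  have hPQ : IsCompl P (g.orthogonal P) :=
    g.isCompl_orthogonal_of_restrict_nondegenerate hg.isRefl
      (g.nondegenerate_restrict_of_disjoint_orthogonal hg.isRefl hPpos.disjoint_orthogonal)
  refine ⟨P, hPJ, hPpos, hPQ, fun q hq hq0 => ?_⟩
  by_contra hqq
  have hqq : 0 ≤ g q q := by simpa using hqq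
  obtain ⟨q', hq', hq'pos⟩ := exists_mem_orthogonal_pos hg hnd hPQ hq hq0 hqq
  set W := Submodule.span ℝ {q', J q'}
  have hWP : W ≤ g.orthogonal P := by
    rw [Submodule.span_le, Set.insert_subset_iff, Set.singleton_subset_iff]
    exact ⟨hq', map_mem_orthogonal hJ hgJ hPJ q' hq'⟩
  have hWJ : ∀ x ∈ P ⊔ W, J x ∈ P ⊔ W := by
    intro x hx
    obtain ⟨p, hp, w, hw, rfl⟩ := Submodule.mem_sup.mp hx
    rw [map_add]
    exact Submodule.add_mem_sup (hPJ p hp) (map_mem_span_pair hJ q' w hw)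
  have hlt : P < P ⊔ W := by
    refine left_lt_sup.mpr fun hWP' => ?_
    have hq'0 : q' = 0 :=
      Submodule.disjoint_def.mp hPQ.disjoint q' (hWP' (Submodule.subset_span (by simp))) hq'
    simp [hq'0] at hq'pos
  exact hPmax (P ⊔ W)
    ⟨hWJ, hPpos.sup hg (posDefOn_span_pair hg hJ hgJ hq'pos) hWP⟩ hlt

end ComplexStructure

end LinearMap.BilinForm

/-- Supporting lemma: if a finite-dimensional real vector space carries a
nondegenerate symmetric bilinear form `g` and a compatible complex structure `J`
(`J² = −id`, `g(JX, JY) = g(X, Y)`), then there is a `g`-orthogonal direct sum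
decomposition `V = P ⊕ Q` with `g` positive definite on `P`, negative definite on
`Q`, and both `dim P` and `dim Q` even. -/
theorem compatible_complex_structure_forces_even_signature
    (V : Type*) [AddCommGroup V] [Module ℝ V] [FiniteDimensional ℝ V]
    (g : LinearMap.BilinForm ℝ V)
    (hsymm : ∀ x y : V, g x y = g y x)
    (hnd : g.Nondegenerate)
    (J : V →ₗ[ℝ] V)
    (hJ : J ∘ₗ J = -LinearMap.id)
    (hgJ : ∀ x y : V, g (J x) (J y) = g x y) :
    ∃ P Q : Submodule ℝ V,
      P ⊓ Q = ⊥ ∧ P ⊔ Q = ⊤ ∧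
      (∀ p ∈ P, ∀ q ∈ Q, g p q = 0) ∧
      (∀ p ∈ P, p ≠ 0 → 0 < g p p) ∧
      (∀ q ∈ Q, q ≠ 0 → g q q < 0) ∧
      Even (Module.finrank ℝ P) ∧ Even (Module.finrank ℝ Q) := by
  have hJJ : ∀ v, J (J v) = -v := fun v => by simpa using LinearMap.congr_fun hJ v
  obtain ⟨P, hPJ, hPpos, hPQ, hQneg⟩ :=
    LinearMap.BilinForm.exists_invariant_posDefOn_negDefOn_orthogonal ⟨hsymm⟩ hnd hJJ hgJ
  refine ⟨P, g.orthogonal P, hPQ.inf_eq_bot, hPQ.sup_eq_top, fun p hp q hq => hq p hp, hPpos,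
    fun q hq hq0 => by simpa using hQneg q hq hq0, even_finrank_of_invariant hJ hPJ,
    even_finrank_of_invariant hJ (LinearMap.BilinForm.map_mem_orthogonal hJJ hgJ hPJ)⟩
end

section
/- Let (a_{αβ}) be a real 3×3 matrix satisfying Σ_{γ=1}^{3} ε_γ a_{γα} a_{γβ} = ε_α δ_{αβ} for all α, β ∈ {1, 2, 3} (i.e. it preserves the quadratic form diag(1, −1, −1), as does the transition matrix A ∈ SO(2,1) between two canonical local bases). Set J'_α := Σ_{β=1}^{3} a_{αβ} J_β and Ω'_α(X, Y) := g(X, J'_α Y). Then Σ_{α=1}^{3} ε_α Ω'_α(X, Y) Ω'_α(Z, T) = Σ_{α=1}^{3} ε_α Ω_α(X, Y) Ω_α(Z, T) for all X, Y, Z, T ∈ V. (This expresses that the fundamental 4-form Ω = Ω₁∧Ω₁ − Ω₂∧Ω₂ − Ω₃∧Ω₃ of an almost paraquaternionic hermitian manifold is globally well defined, independently of the choice of canonical local basis.) -/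
/-! The vectors `(Ω'_α(X, Y))_α` and `(Ω_α(X, Y))_α` are related by `a`, and the sum in question
is the form `diag ε` evaluated on two such vectors; `a` preserves that form. -/

open Matrix

theorem Matrix.sum_mul_mulVec_mul_mulVec_eq_of_transpose_mul_diagonal_mul_eq
    {n R : Type*} [Fintype n] [DecidableEq n] [CommSemiring R]
    (ε : n → R) (a : Matrix n n R) (ha : aᵀ * diagonal ε * a = diagonal ε) (x y : n → R) :
    ∑ i, ε i * (a *ᵥ x) i * (a *ᵥ y) i = ∑ i, ε i * x i * y i := by
  have hform : ∀ u v : n → R, ∑ i, ε i * u i * v i = u ⬝ᵥ (diagonal ε *ᵥ v) := fun u v => by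
    simp only [dotProduct, mulVec_diagonal]
    exact Finset.sum_congr rfl fun i _ => by ring
  rw [hform, hform, mulVec_mulVec, ← vecMul_transpose, ← dotProduct_mulVec, mulVec_mulVec,
    ← Matrix.mul_assoc, ha]

theorem Matrix.transpose_mul_diagonal_mul_eq_diagonal_iff
    {n R : Type*} [Fintype n] [DecidableEq n] [CommSemiring R] (ε : n → R) (a : Matrix n n R) :
    aᵀ * diagonal ε * a = diagonal ε ↔
      ∀ i j, ∑ k, ε k * a k i * a k j = ε i * if i = j then 1 else 0 := by
  simp only [← Matrix.ext_iff, mul_apply, transpose_apply, diagonal_apply, mul_ite, mul_one,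
    mul_zero, Finset.sum_ite_eq', Finset.mem_univ, if_true]
  refine forall₂_congr fun i j => Eq.congr_left (Finset.sum_congr rfl fun k _ => by ring)

theorem LinearMap.apply_sum_smul_apply {R V ι : Type*} [CommSemiring R] [AddCommMonoid V]
    [Module R V] [Fintype ι] (g : V →ₗ[R] V →ₗ[R] R) (J : ι → V →ₗ[R] V) (c : ι → R) (X Y : V) :
    g X ((∑ β, c β • J β) Y) = ∑ β, c β * g X (J β Y) := by
  simp [map_sum]

theorem fundamental_four_form_well_defined_general
    (V : Type*) [AddCommGroup V] [Module ℝ V]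
    (g : V →ₗ[ℝ] V →ₗ[ℝ] ℝ)
    (J : Fin 3 → (V →ₗ[ℝ] V))
    (ε : Fin 3 → ℝ)
    (a : Matrix (Fin 3) (Fin 3) ℝ)
    (ha : ∀ α β : Fin 3,
      ∑ γ : Fin 3, ε γ * a γ α * a γ β = ε α * (if α = β then 1 else 0))
    (J' : Fin 3 → (V →ₗ[ℝ] V))
    (hJ' : ∀ α : Fin 3, J' α = ∑ β : Fin 3, a α β • J β) :
    ∀ X Y Z T : V,
      ∑ α : Fin 3, ε α * (g X (J' α Y)) * (g Z (J' α T)) =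
      ∑ α : Fin 3, ε α * (g X (J α Y)) * (g Z (J α T)) := by
  intro X Y Z T
  have hΩ' : ∀ W U : V, (fun α => g W (J' α U)) = a *ᵥ fun β => g W (J β U) := fun W U => by
    ext α
    rw [hJ', LinearMap.apply_sum_smul_apply]
    rfl
  have hpreserve := (transpose_mul_diagonal_mul_eq_diagonal_iff ε a).2 ha
  simpa only [← hΩ'] using
    sum_mul_mulVec_mul_mulVec_eq_of_transpose_mul_diagonal_mul_eq ε a hpreserve
      (fun β => g X (J β Y)) (fun β => g Z (J β T))

/-- The fundamental 4-form of an almost paraquaternionic hermitian manifold is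
well defined: if the real `3×3` matrix `(a_{αβ})` preserves the quadratic form
`diag(1, −1, −1)` (i.e. `Σ_γ ε_γ a_{γα} a_{γβ} = ε_α δ_{αβ}`) and
`J'_α := Σ_β a_{αβ} J_β`, `Ω'_α(X, Y) := g(X, J'_α Y)`, then
`Σ_α ε_α Ω'_α(X, Y) Ω'_α(Z, T) = Σ_α ε_α Ω_α(X, Y) Ω_α(Z, T)`. -/
theorem fundamental_four_form_well_defined
    (V : Type*) [AddCommGroup V] [Module ℝ V]
    (g : V →ₗ[ℝ] V →ₗ[ℝ] ℝ)
    (J : Fin 3 → (V →ₗ[ℝ] V))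
    (ε : Fin 3 → ℝ) (hε0 : ε 0 = 1) (hε1 : ε 1 = -1) (hε2 : ε 2 = -1)
    (a : Matrix (Fin 3) (Fin 3) ℝ)
    (ha : ∀ α β : Fin 3,
      ∑ γ : Fin 3, ε γ * a γ α * a γ β = ε α * (if α = β then 1 else 0))
    (J' : Fin 3 → (V →ₗ[ℝ] V))
    (hJ' : ∀ α : Fin 3, J' α = ∑ β : Fin 3, a α β • J β) :
    ∀ X Y Z T : V,
      ∑ α : Fin 3, ε α * (g X (J' α Y)) * (g Z (J' α T)) =
      ∑ α : Fin 3, ε α * (g X (J α Y)) * (g Z (J α T)) :=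
  fundamental_four_form_well_defined_general V g J ε a ha J' hJ'
end
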